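/- arXiv:0806.4341 — 5 statements merged into one kernel-verified Lean document; each statement's English description precedes it below -/
import Mathlib

section
/- Let u: {0,1}* → ℕ be a function satisfying: (1) u(x) ≥ u(y) whenever x ⊑ y; and (2) if x ⊑ y and u(x) > u(y), then u(x) > u(z) for all z with x ⊑ z and |z| = |y|. Then the function û(ω) = min{n : u(ω^i) = u(ω^n) for all i ≥ n} is defined for all infinite binary sequences ω, and there exists m such that u(x) = u(x^m) for all strings x with |x| ≥ m (where x^m denotes the length-m prefix). -/
/-!
Induct on the value `u x`, showing that above every `x` the function `u` eventually depends only
on a fixed-length prefix. If `u` is constant on the extensions of `x` there is nothing to do.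
Otherwise some `y ⊒ x` has `u y < u x`, and by (2) so does every extension of `x` of length `|y|`.
There are finitely many of these, and each stabilises by induction, so a common level works
for `x`. At `x = []` this is the required `m`; it plays the role of the compactness argument.
-/

open Filter

namespace List

variable {α : Type*}

def IsStableFrom (u : List α → ℕ) (x : List α) (m : ℕ) : Prop :=
  ∀ z, x <+: z → m ≤ z.length → u z = u (z.take m)

variable {u : List α → ℕ}

theorem eventually_isStableFrom_of_forall_prefix_eq {x : List α}
    (h : ∀ z, x <+: z → u z = u x) : ∀ᶠ m in atTop, IsStableFrom u x m := by
  filter_upwards [eventually_ge_atTop x.length] with m hm z hz hlen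
  have hxz' : x <+: z.take m := by simpa [take_of_length_le hm] using hz.take m
  rw [h z hz, h _ hxz']

theorem isStableFrom_of_forall_length_eq {x : List α} {L m : ℕ} (hL : x.length ≤ L)
    (hm : L ≤ m) (h : ∀ w, w.length = L → x <+: w → IsStableFrom u w m) :
    IsStableFrom u x m := fun z hz hlen =>
  h (z.take L) (by simp only [length_take]; omega) (by simpa [take_of_length_le hL] using hz.take L) z
    (take_prefix L z) hlen

theorem eventually_isStableFrom [Finite α]
    (hmono : ∀ x y : List α, x <+: y → u y ≤ u x)
    (hdrop : ∀ x y z : List α, x <+: y → u y < u x →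
      x <+: z → z.length = y.length → u z < u x)
    (x : List α) : ∀ᶠ m in atTop, IsStableFrom u x m := by
  induction hn : u x using Nat.strong_induction_on generalizing x with
  | _ n ih =>
  by_cases hconst : ∀ z, x <+: z → u z = u x
  · exact eventually_isStableFrom_of_forall_prefix_eq hconst
  push Not at hconst
  obtain ⟨y, hxy, hne⟩ := hconst
  have hlt : u y < u x := (hmono x y hxy).lt_of_ne hne
  have hfin : {w : List α | w.length = y.length ∧ x <+: w}.Finite :=
    (finite_length_eq α y.length).subset fun _ hw => hw.1
  have hext : ∀ w ∈ {w : List α | w.length = y.length ∧ x <+: w},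
      ∀ᶠ m in atTop, IsStableFrom u w m :=
    fun w ⟨hw, hxw⟩ => ih (u w) (hn ▸ hdrop x y w hxy hlt hxw hw) w rfl
  filter_upwards [hfin.eventually_all.2 hext, eventually_ge_atTop y.length] with m hm hLm
  exact isStableFrom_of_forall_length_eq hxy.length_le hLm fun w hw hxw => hm w ⟨hw, hxw⟩

end List

/-- If `u : {0,1}* → ℕ` is non-increasing along the prefix order and satisfies:
whenever `x ⊑ y` and `u x > u y`, then `u x > u z` for every `z ⊒ x` of the same
length as `y`; then `û(ω) = min{n : u(ω^i) = u(ω^n) for all i ≥ n}` is defined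
for every infinite sequence `ω`, and there is an `m` such that
`u x = u (x^m)` for all strings `x` of length `≥ m`. -/
theorem stmt5 (u : List Bool → ℕ)
    (hmono : ∀ x y : List Bool, x <+: y → u y ≤ u x)
    (hdrop : ∀ x y z : List Bool, x <+: y → u y < u x →
      x <+: z → z.length = y.length → u z < u x) :
    (∀ ω : ℕ → Bool, ∃ n : ℕ, ∀ i : ℕ, n ≤ i →
      u (List.ofFn (fun k : Fin i => ω k)) = u (List.ofFn (fun k : Fin n => ω k))) ∧
    (∃ m : ℕ, ∀ x : List Bool, m ≤ x.length → u x = u (x.take m)) := by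
  obtain ⟨m, hm⟩ := (List.eventually_isStableFrom hmono hdrop []).exists
  have hstable : ∀ x : List Bool, m ≤ x.length → u x = u (x.take m) :=
    fun x hx => hm x List.nil_prefix hx
  refine ⟨fun ω => ⟨m, fun i hi => ?_⟩, m, hstable⟩
  rw [hstable _ (by simpa using hi), ← Fin.ofFn_take_eq_take_ofFn hi]
  rfl
end

section
/- Let f: {0,1}* → [0,1] be total and define ω recursively by ω_i = 1 iff f(ω^{i−1}) < 1/2. For ν = 0 let I_0 be the indicator of [0,1/2) and for ν = 1 let I_1 be the indicator of [1/2,1]. Then for ν = 0, every term I_0(p_i)(ω_i − p_i) with p_i = f(ω^{i−1}) is nonnegative and equals at least 1/2 whenever I_0(p_i) = 1; symmetrically for ν = 1 each term I_1(p_i)(ω_i − p_i) ≤ −1/2 whenever I_1(p_i) = 1. Consequently, for at least one ν ∈ {0,1}, limsup_n |(1/n) Σ_{i=1}^n I_ν(p_i)(ω_i − p_i)| ≥ 1/4. -/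
open Filter Finset

/-!
When the forecast `p` lies in `[0, 1/2)` the outcome is `1`, so the `I0`-term `1 - p` exceeds `1/2`;
otherwise the outcome is `0` and the `I1`-term `-p` is at most `-1/2`. Since `I0 + I1 = 1` on
`[0, 1]`, the two running sums differ by at least `n/2`, so at every `n` one of the two averages has
absolute value at least `1/4`; this happens infinitely often for one fixed rule, and as the averages
are bounded by `1` the real `limsup` is not the junk value of an unbounded sequence.
-/

/-- indicator of the interval `[0, 1/2)` -/
noncomputable def I0 (p : ℝ) : ℝ := if 0 ≤ p ∧ p < 1/2 then 1 else 0

/-- indicator of the interval `[1/2, 1]` -/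
noncomputable def I1 (p : ℝ) : ℝ := if 1/2 ≤ p ∧ p ≤ 1 then 1 else 0

section Term

variable {p w : ℝ}

theorem I0_nonneg (p : ℝ) : 0 ≤ I0 p := by
  unfold I0; split_ifs <;> norm_num

theorem I0_add_I1 (h0 : 0 ≤ p) (h1 : p ≤ 1) : I0 p + I1 p = 1 := by
  unfold I0 I1
  by_cases h : p < 1/2
  · rw [if_pos ⟨h0, h⟩, if_neg (by rintro ⟨h', -⟩; linarith)]; norm_num
  · rw [if_neg (by rintro ⟨-, h'⟩; exact h h'), if_pos ⟨not_lt.mp h, h1⟩]; norm_num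

theorem half_mul_I0_le (hw : w = if p < 1/2 then 1 else 0) :
    1/2 * I0 p ≤ I0 p * (w - p) := by
  unfold I0
  split_ifs at hw ⊢ with hI hp
  · linarith [hI.2]
  · exact absurd hI.2 hp
  all_goals norm_num

theorem I1_mul_le_neg_half_mul (hw : w = if p < 1/2 then 1 else 0) :
    I1 p * (w - p) ≤ -(1/2) * I1 p := by
  unfold I1
  split_ifs at hw ⊢ with hI hp
  · linarith [hI.1]
  · linarith [hI.1]
  all_goals norm_num

theorem abs_I0_mul_le_one (hw : w = if p < 1/2 then 1 else 0) :
    |I0 p * (w - p)| ≤ 1 := by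
  unfold I0
  split_ifs at hw ⊢ with hI hp <;> simp only [hw, abs_le] <;> norm_num <;>
    constructor <;> linarith [hI.1, hI.2]

theorem abs_I1_mul_le_one (hw : w = if p < 1/2 then 1 else 0) :
    |I1 p * (w - p)| ≤ 1 := by
  unfold I1
  split_ifs at hw ⊢ with hI hp <;> simp only [hw, abs_le] <;> norm_num <;>
    constructor <;> linarith [hI.1, hI.2]

end Term

section Average

variable {x y : ℕ → ℝ} {C c : ℝ}

theorem abs_avg_le_of_abs_le (hx : ∀ i, |x i| ≤ C) (n : ℕ) :
    |(1 / (n : ℝ)) * ∑ i ∈ range n, x i| ≤ C := by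
  rcases n.eq_zero_or_pos with rfl | hn
  · simpa using (abs_nonneg _).trans (hx 0)
  have hn' : (0 : ℝ) < n := by exact_mod_cast hn
  rw [abs_mul, abs_of_pos (by positivity), one_div, inv_mul_le_iff₀ hn']
  calc |∑ i ∈ range n, x i| ≤ ∑ i ∈ range n, |x i| := abs_sum_le_sum_abs _ _
    _ ≤ ∑ _i ∈ range n, C := sum_le_sum fun i _ => hx i
    _ = n * C := by simp

theorem le_abs_avg_or_le_abs_avg (hxy : ∀ i, 2 * c ≤ x i - y i) {n : ℕ} (hn : n ≠ 0) :
    c ≤ |(1 / (n : ℝ)) * ∑ i ∈ range n, x i| ∨ c ≤ |(1 / (n : ℝ)) * ∑ i ∈ range n, y i| := by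
  have hn' : (0 : ℝ) < n := by positivity
  have hsum : n * (2 * c) ≤ ∑ i ∈ range n, x i - ∑ i ∈ range n, y i := by
    rw [← sum_sub_distrib]
    simpa using card_nsmul_le_sum (range n) (fun i => x i - y i) _ fun i _ => hxy i
  have hdiff : 2 * c ≤ (1 / (n : ℝ)) * ∑ i ∈ range n, x i - (1 / (n : ℝ)) * ∑ i ∈ range n, y i := by
    rw [← mul_sub, one_div, le_inv_mul_iff₀ hn']
    exact hsum
  by_contra! h
  linarith [le_abs_self ((1 / (n : ℝ)) * ∑ i ∈ range n, x i),
    neg_abs_le ((1 / (n : ℝ)) * ∑ i ∈ range n, y i)]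

theorem le_limsup_abs_avg_or (hx : ∀ i, |x i| ≤ C) (hy : ∀ i, |y i| ≤ C)
    (hxy : ∀ i, 2 * c ≤ x i - y i) :
    c ≤ limsup (fun n : ℕ => |(1 / (n : ℝ)) * ∑ i ∈ range n, x i|) atTop ∨
      c ≤ limsup (fun n : ℕ => |(1 / (n : ℝ)) * ∑ i ∈ range n, y i|) atTop := by
  have hfreq : ∃ᶠ n : ℕ in atTop, c ≤ |(1 / (n : ℝ)) * ∑ i ∈ range n, x i| ∨
      c ≤ |(1 / (n : ℝ)) * ∑ i ∈ range n, y i| :=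
    (eventually_ne_atTop 0).mono (fun n hn => le_abs_avg_or_le_abs_avg hxy hn) |>.frequently
  rcases frequently_or_distrib.mp hfreq with h | h
  · exact Or.inl (le_limsup_of_frequently_le h
      (isBoundedUnder_of_eventually_le (Eventually.of_forall (abs_avg_le_of_abs_le hx))))
  · exact Or.inr (le_limsup_of_frequently_le h
      (isBoundedUnder_of_eventually_le (Eventually.of_forall (abs_avg_le_of_abs_le hy))))

end Average

/-- For Oakes' adversarial sequence against a total forecaster `f`, the checked
terms are one-sided and of size at least `1/2` whenever the corresponding rule
fires; consequently for at least one `ν ∈ {0,1}` the calibration error of the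
rule `I_ν` has `limsup` at least `1/4`. -/
theorem stmt12 (f : List Bool → ℝ) (hf : ∀ x, 0 ≤ f x ∧ f x ≤ 1)
    (ω : ℕ → Bool)
    (hω : ∀ i : ℕ, ω i = decide (f (List.ofFn (fun k : Fin i => ω k)) < 1/2))
    (p : ℕ → ℝ) (hp : ∀ i, p i = f (List.ofFn (fun k : Fin i => ω k)))
    (w : ℕ → ℝ) (hw : ∀ i, w i = if ω i then 1 else 0) :
    (∀ i, 0 ≤ I0 (p i) * (w i - p i)) ∧
    (∀ i, I0 (p i) = 1 → 1/2 ≤ I0 (p i) * (w i - p i)) ∧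
    (∀ i, I1 (p i) = 1 → I1 (p i) * (w i - p i) ≤ -(1/2)) ∧
    ((1/4 : ℝ) ≤ limsup (fun n : ℕ =>
        |(1 / (n : ℝ)) * ∑ i ∈ Finset.range n, I0 (p i) * (w i - p i)|) atTop ∨
     (1/4 : ℝ) ≤ limsup (fun n : ℕ =>
        |(1 / (n : ℝ)) * ∑ i ∈ Finset.range n, I1 (p i) * (w i - p i)|) atTop) := by
  have hwp : ∀ i, w i = if p i < 1/2 then 1 else 0 := fun i => by
    rw [hw, hω, ← hp]
    simp only [decide_eq_true_eq]
  refine ⟨fun i => ?_, fun i h => ?_, fun i h => ?_, ?_⟩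
  · linarith [half_mul_I0_le (hwp i), I0_nonneg (p i)]
  · simpa [h] using half_mul_I0_le (hwp i)
  · simpa [h] using I1_mul_le_neg_half_mul (hwp i)
  refine le_limsup_abs_avg_or (fun i => abs_I0_mul_le_one (hwp i))
    (fun i => abs_I1_mul_le_one (hwp i)) fun i => ?_
  have hsum := I0_add_I1 (hp i ▸ (hf _).1) (hp i ▸ (hf _).2)
  linarith [half_mul_I0_le (hwp i), I1_mul_le_neg_half_mul (hwp i)]
end

section
/- Let q be a network on the infinite binary tree with flow R defined by R(λ)=1, R(y) = Σ_{σ: σ₂=y} q(σ)R(σ₁), where for unit edges q(x,xb) = (1−d(x))/2 and q(σ) = d(σ₁) for extra edges σ ∈ G. Suppose the extra edges in G have pairwise distinct terminal-vertex lengths at each level and satisfy: for σ ∈ G with |σ₂| = n, d(u) = d(σ₁)/(1 − d(σ₁)) for all u with P(u,σ) (i.e., |u| = n, σ₁ ⊑ u, u ≠ σ₂) and d(u)=0 otherwise at level n. Then Σ_{u: P(u,σ)} R(u) ≤ R(σ₁) − d(σ₁)R(σ₁) = (1 − d(σ₁))R(σ₁) for every σ ∈ G with |σ₂| = n. -/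
/-!
Let `a = σ₁` and let `S k` be the total flow through the level-`k` descendants of `a`. Each vertex
`w` passes exactly `(1 - d w) R w` on to its two children, and by `hdistinct` the only extra edge
entering the subtree of `a` at levels `≤ n` is `σ` itself. Hence `S (|a| + 1) = (1 - d a) R a`, the
sums `S k` do not increase up to level `n - 1`, and `S n ≤ (1 - d a) R a + d a R a`. Since `σ`
alone already delivers `d a R a` to `σ₂`, the remaining level-`n` descendants carry at most
`(1 - d a) R a`.
-/

open Finset

section LevelSum

variable {α : Type*} [Fintype α]

theorem sum_ofFn_succ (f : List α → ℝ) (k : ℕ) :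
    ∑ v : Fin (k + 1) → α, f (List.ofFn v) = ∑ w : Fin k → α, ∑ x : α, f (List.ofFn w ++ [x]) := by
  rw [← (Fin.snocEquiv fun _ ↦ α).sum_comp, Fintype.sum_prod_type, sum_comm]
  simp [-List.ofFn_succ, List.ofFn_succ_last]

variable [DecidableEq α]

def levelSum (f : List α → ℝ) (a : List α) (k : ℕ) : ℝ :=
  ∑ v : Fin k → α, if a <+: List.ofFn v then f (List.ofFn v) else 0

theorem sum_ite_ofFn_eq (g : List α → ℝ) (k : ℕ) (c : List α) :
    (∑ v : Fin k → α, if List.ofFn v = c then g (List.ofFn v) else 0)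
      = if k = c.length then g c else 0 := by
  split_ifs with hk
  · subst hk
    rw [Fintype.sum_eq_single c.get fun v hv ↦
      if_neg fun h ↦ hv (List.ofFn_injective (by rw [h, List.ofFn_get]))]
    rw [List.ofFn_get, if_pos rfl]
  · exact sum_eq_zero fun v _ ↦ if_neg fun h ↦ hk (by rw [← h, List.length_ofFn])

theorem levelSum_length (f : List α → ℝ) (a : List α) : levelSum f a a.length = f a := by
  have hpre : ∀ v : Fin a.length → α, a <+: List.ofFn v ↔ List.ofFn v = a := fun v ↦
    ⟨fun h ↦ (h.eq_of_length (by simp)).symm, fun h ↦ by rw [h]⟩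
  rw [levelSum, sum_congr rfl fun v _ ↦ if_congr (hpre v) rfl rfl, sum_ite_ofFn_eq, if_pos rfl]

theorem levelSum_succ (f : List α → ℝ) {a : List α} {k : ℕ} (hk : a.length ≤ k) :
    levelSum f a (k + 1) = levelSum (fun w ↦ ∑ x : α, f (w ++ [x])) a k := by
  have hpre : ∀ (w : Fin k → α) (x : α), a <+: List.ofFn w ++ [x] ↔ a <+: List.ofFn w := by
    intro w x
    rw [List.prefix_concat_iff, or_iff_right]
    rintro rfl
    simp at hk
  simp_rw [levelSum, sum_ofFn_succ (fun u ↦ if a <+: u then f u else 0), hpre, sum_ite_irrel,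
    sum_const_zero]

theorem levelSum_add (f g : List α → ℝ) (a : List α) (k : ℕ) :
    levelSum (fun u ↦ f u + g u) a k = levelSum f a k + levelSum g a k := by
  simp_rw [levelSum, ← sum_add_distrib, ite_add_ite, add_zero]

theorem levelSum_mono {f g : List α → ℝ} {a : List α} (h : ∀ u, a <+: u → f u ≤ g u) (k : ℕ) :
    levelSum f a k ≤ levelSum g a k := by
  refine sum_le_sum fun v _ ↦ ?_
  split_ifs with hv
  · exact h _ hv
  · exact le_rfl

theorem levelSum_length_eq_add {a b : List α} (hab : a <+: b) (f : List α → ℝ) :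
    levelSum f a b.length =
      (∑ v : Fin b.length → α, if a <+: List.ofFn v ∧ List.ofFn v ≠ b then f (List.ofFn v) else 0)
        + f b := by
  have hb := sum_ite_ofFn_eq f b.length b
  rw [if_pos rfl] at hb
  rw [← hb, ← sum_add_distrib]
  refine sum_congr rfl fun v _ ↦ ?_
  by_cases hvb : List.ofFn v = b
  · simp [hvb, hab]
  · simp [hvb]

end LevelSum

section BinaryNetwork

variable {d R I : List Bool → ℝ}

theorem levelSum_succ_of_flow
    (hrec : ∀ y : List Bool, y ≠ [] → R y = (1 - d y.dropLast) / 2 * R y.dropLast + I y)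
    {a : List Bool} {k : ℕ} (hk : a.length ≤ k) :
    levelSum R a (k + 1) = levelSum (fun w ↦ (1 - d w) * R w) a k + levelSum I a (k + 1) := by
  have hchildren : ∀ w : List Bool,
      ∑ x : Bool, R (w ++ [x]) = (1 - d w) * R w + ∑ x : Bool, I (w ++ [x]) := by
    intro w
    simp only [Fintype.sum_bool, hrec _ (List.concat_ne_nil _ _), List.dropLast_concat]
    ring
  rw [levelSum_succ R hk, levelSum_succ I hk, ← levelSum_add]
  simp_rw [hchildren]

theorem levelSum_le_of_flow (hd : ∀ x, 0 ≤ d x) (hR : ∀ x, 0 ≤ R x)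
    (hrec : ∀ y : List Bool, y ≠ [] → R y = (1 - d y.dropLast) / 2 * R y.dropLast + I y)
    {a : List Bool} {n : ℕ} {c : ℝ}
    (hI : ∀ k, a.length < k → k ≤ n → levelSum I a k = if k = n then c else 0)
    {k : ℕ} (hak : a.length < k) (hkn : k ≤ n) :
    levelSum R a k ≤ (1 - d a) * R a + if k = n then c else 0 := by
  induction k, hak using Nat.le_induction with
  | base =>
    rw [levelSum_succ_of_flow hrec le_rfl, levelSum_length, hI _ (Nat.lt_succ_self _) hkn]
  | succ k hak ih =>
    have hdamped : levelSum (fun w ↦ (1 - d w) * R w) a k ≤ levelSum R a k :=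
      levelSum_mono (fun u _ ↦ by nlinarith [hd u, hR u]) k
    rw [levelSum_succ_of_flow hrec (by omega), hI _ (by omega) hkn]
    have := ih (by omega)
    rw [if_neg (by omega)] at this
    linarith

variable (d R : List Bool → ℝ) (G : Finset (List Bool × List Bool))

def inflow (y : List Bool) : ℝ :=
  ∑ σ ∈ G.filter (fun σ ↦ σ.2 = y), d σ.1 * R σ.1

variable {d R G}

theorem inflow_eq_ite {σ : List Bool × List Bool} (hσ : σ ∈ G) {n : ℕ}
    (hdistinct : ∀ τ ∈ G, τ ≠ σ → σ.1 <+: τ.2 → τ.2.length ≤ n → False)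
    {y : List Bool} (hy : σ.1 <+: y) (hyn : y.length ≤ n) :
    inflow d R G y = if y = σ.2 then d σ.1 * R σ.1 else 0 := by
  have hother : ∀ τ ∈ G.filter (fun τ ↦ τ.2 = y), τ = σ := fun τ hτ ↦ by
    rw [mem_filter] at hτ
    by_contra hne
    exact hdistinct τ hτ.1 hne (hτ.2 ▸ hy) (hτ.2 ▸ hyn)
  split_ifs with h
  · subst h
    exact sum_eq_single_of_mem σ (mem_filter.2 ⟨hσ, rfl⟩) fun τ hτ hne ↦ absurd (hother τ hτ) hne
  · refine sum_eq_zero fun τ hτ ↦ absurd ?_ h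
    rw [← (mem_filter.1 hτ).2, hother τ hτ]

theorem levelSum_inflow {σ : List Bool × List Bool} (hσ : σ ∈ G) {n : ℕ}
    (hdistinct : ∀ τ ∈ G, τ ≠ σ → σ.1 <+: τ.2 → τ.2.length ≤ n → False)
    (hn : σ.2.length = n) (hpre : σ.1 <+: σ.2) {k : ℕ} (hkn : k ≤ n) :
    levelSum (inflow d R G) σ.1 k = if k = n then d σ.1 * R σ.1 else 0 := by
  have hterm : ∀ v : Fin k → Bool,
      (if σ.1 <+: List.ofFn v then inflow d R G (List.ofFn v) else 0)
        = if List.ofFn v = σ.2 then d σ.1 * R σ.1 else 0 := by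
    intro v
    by_cases hv : σ.1 <+: List.ofFn v
    · rw [if_pos hv]
      exact inflow_eq_ite hσ hdistinct hv (by simpa using hkn)
    · rw [if_neg hv, if_neg fun h ↦ hv (by rw [h]; exact hpre)]
  rw [levelSum, sum_congr rfl fun v _ ↦ hterm v, sum_ite_ofFn_eq (fun _ ↦ d σ.1 * R σ.1), hn]

end BinaryNetwork

theorem stmt13_general (d : List Bool → ℝ) (R : List Bool → ℝ)
    (G : Finset (List Bool × List Bool))
    (hd : ∀ x, 0 ≤ d x ∧ d x ≤ 1)
    (hR : ∀ x, 0 ≤ R x)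
    (hrec : ∀ y : List Bool, y ≠ [] →
      R y = (1 - d y.dropLast) / 2 * R y.dropLast +
        ∑ σ ∈ G.filter (fun σ => σ.2 = y), d σ.1 * R σ.1)
    (σ : List Bool × List Bool) (hσ : σ ∈ G) (n : ℕ)
    (hn : σ.2.length = n) (hpre : σ.1 <+: σ.2) (hlt : σ.1.length < n)
    (hdistinct : ∀ τ ∈ G, τ ≠ σ → σ.1 <+: τ.2 → τ.2.length ≤ n → False) :
    (∑ v : Fin n → Bool,
        if σ.1 <+: List.ofFn v ∧ List.ofFn v ≠ σ.2 then R (List.ofFn v) else 0)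
      ≤ (1 - d σ.1) * R σ.1 := by
  have hflow : ∀ y : List Bool, y ≠ [] →
      R y = (1 - d y.dropLast) / 2 * R y.dropLast + inflow d R G y := hrec
  have hbound := levelSum_le_of_flow (fun x ↦ (hd x).1) hR hflow
    (fun k _ hkn ↦ levelSum_inflow hσ hdistinct hn hpre hkn) hlt le_rfl
  have hterminal : d σ.1 * R σ.1 ≤ R σ.2 := by
    have hne : σ.2 ≠ [] := by rintro h; simp [h] at hn; omega
    rw [hflow _ hne, inflow_eq_ite hσ hdistinct hpre hn.le, if_pos rfl]
    have := mul_nonneg (sub_nonneg.2 (hd σ.2.dropLast).2) (hR σ.2.dropLast)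
    linarith
  subst hn
  rw [levelSum_length_eq_add hpre, if_pos rfl] at hbound
  linarith

/-- Key flow estimate of Lemma 5: for an extra edge `σ ∈ G` with `|σ₂| = n`,
the total flow reaching the level-`n` descendants of `σ₁` other than `σ₂` is at
most `(1 − d(σ₁))·R(σ₁)`. -/
theorem stmt13 (d : List Bool → ℝ) (R : List Bool → ℝ)
    (G : Finset (List Bool × List Bool))
    (hd : ∀ x, 0 ≤ d x ∧ d x ≤ 1)
    (hR : ∀ x, 0 ≤ R x)
    (hroot : R [] = 1)
    (hrec : ∀ y : List Bool, y ≠ [] →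
      R y = (1 - d y.dropLast) / 2 * R y.dropLast +
        ∑ σ ∈ G.filter (fun σ => σ.2 = y), d σ.1 * R σ.1)
    (σ : List Bool × List Bool) (hσ : σ ∈ G) (n : ℕ)
    (hn : σ.2.length = n) (hpre : σ.1 <+: σ.2) (hlt : σ.1.length < n)
    (hdistinct : ∀ τ ∈ G, τ ≠ σ → σ.1 <+: τ.2 → τ.2.length ≤ n → False)
    (hdelay : ∀ u : List Bool, u.length = n → σ.1 <+: u → u ≠ σ.2 →
      d u = d σ.1 / (1 - d σ.1)) :
    (∑ v : Fin n → Bool,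
        if σ.1 <+: List.ofFn v ∧ List.ofFn v ≠ σ.2 then R (List.ofFn v) else 0)
      ≤ (1 - d σ.1) * R σ.1 :=
  stmt13_general d R G hd hR hrec σ hσ n hn hpre hlt hdistinct
end

section
/- Let Q be a semimeasure obtained as a q-flow, with the property (from the construction) that whenever an extra edge (x,z) ∈ G is mounted, d(z^n) < 1 for all n < |z| along z (extra edges are never mounted across vertices with delay 1). Then Q(y) = 0 if and only if there exists an edge of unit length (y^n, y^{n+1}) with n < |y| and q(y^n, y^{n+1}) = 0 (equivalently, d(y^n) = 1). -/
/-!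
A vertex `y` all of whose prefixes have delay `< 1` receives positive flow, by induction along `y`:
the unit-length edge into `y` alone carries a positive fraction of the flow of its parent.
Conversely, if `d w = 1` then no unit-length flow leaves `w`, and no extra edge ends strictly
beyond `w`, so `R` vanishes on the cone strictly beyond `w`. Cutting a semimeasure down to zero
on that cone leaves a semimeasure still dominating `R`, so by minimality `Q` vanishes there too.
-/

def IsSemimeasure (Q : List Bool → ℝ) : Prop :=
  Q [] ≤ 1 ∧ (∀ x, 0 ≤ Q x) ∧ ∀ x, Q (x ++ [false]) + Q (x ++ [true]) ≤ Q x

def FlowRecursion (d R : List Bool → ℝ) (G : Finset (List Bool × List Bool)) : Prop :=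
  ∀ y : List Bool, y ≠ [] →
    R y = (1 - d y.dropLast) / 2 * R y.dropLast + ∑ σ ∈ G.filter (fun σ => σ.2 = y), d σ.1 * R σ.1

theorem IsSemimeasure.indicator_compl {Q : List Bool → ℝ} (hQ : IsSemimeasure Q)
    {S : Set (List Bool)} (hS : ∀ x b, x ∈ S → x ++ [b] ∈ S) :
    IsSemimeasure (Sᶜ.indicator Q) := by
  obtain ⟨hroot, hnonneg, hsplit⟩ := hQ
  have hle : Sᶜ.indicator Q ≤ Q := Set.indicator_le_self' fun x _ => hnonneg x
  refine ⟨(hle []).trans hroot, fun x => Set.indicator_nonneg (fun x _ => hnonneg x) x, fun x => ?_⟩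
  by_cases hx : x ∈ S
  · simp [Set.indicator_of_notMem, hx, hS x]
  · rw [Set.indicator_of_mem (Set.mem_compl hx)]
    exact (add_le_add (hle _) (hle _)).trans (hsplit x)

theorem eq_zero_of_isLeast_semimeasure {R Q : List Bool → ℝ} (hQ : IsSemimeasure Q)
    (hQdom : ∀ x, R x ≤ Q x)
    (hQmin : ∀ Q', IsSemimeasure Q' → (∀ x, R x ≤ Q' x) → ∀ x, Q x ≤ Q' x)
    {S : Set (List Bool)} (hS : ∀ x b, x ∈ S → x ++ [b] ∈ S) (hRS : ∀ x ∈ S, R x = 0) :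
    ∀ x ∈ S, Q x = 0 := by
  have hdom : ∀ x, R x ≤ Sᶜ.indicator Q x := by
    intro x
    by_cases hx : x ∈ S
    · simp [Set.indicator_of_notMem, hx, hRS x hx]
    · simpa [Set.indicator_of_mem (Set.mem_compl hx)] using hQdom x
  intro x hx
  have := hQmin _ (hQ.indicator_compl hS) hdom x
  rw [Set.indicator_of_notMem (Set.notMem_compl_iff.mpr hx)] at this
  exact le_antisymm this (hQ.2.1 x)

namespace FlowRecursion

variable {d R : List Bool → ℝ} {G : Finset (List Bool × List Bool)}

theorem pos_of_delay_lt_one (hrec : FlowRecursion d R G) (hd : ∀ x, 0 ≤ d x)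
    (hR : ∀ x, 0 ≤ R x) (hroot : 0 < R []) :
    ∀ y : List Bool, (∀ n < y.length, d (y.take n) < 1) → 0 < R y := by
  intro y
  induction y using List.reverseRecOn with
  | nil => exact fun _ => hroot
  | append_singleton xs b ih =>
    intro h
    have hxs : 0 < R xs := ih fun n hn => by
      simpa [List.take_append_of_le_length hn.le] using h n (by simp; omega)
    have hdxs : d xs < 1 := by simpa using h xs.length (by simp)
    have hextra : 0 ≤ ∑ σ ∈ G.filter (fun σ => σ.2 = xs ++ [b]), d σ.1 * R σ.1 :=
      Finset.sum_nonneg fun σ _ => mul_nonneg (hd σ.1) (hR σ.1)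
    rw [hrec _ (by simp), List.dropLast_concat]
    nlinarith

theorem eq_zero_beyond_delay_one (hrec : FlowRecursion d R G)
    (hmount : ∀ σ ∈ G, ∀ k < σ.2.length, d (σ.2.take k) < 1) {w : List Bool} (hw : d w = 1) :
    ∀ x : List Bool, w <+: x → w.length < x.length → R x = 0 := by
  intro x
  induction x using List.reverseRecOn with
  | nil => simp
  | append_singleton xs b ih =>
    intro hpre hlen
    have hpre' : w <+: xs := by
      rcases List.prefix_concat_iff.mp hpre with heq | h
      · exact absurd (congrArg List.length heq) hlen.ne
      · exact h
    have hextra : ∑ σ ∈ G.filter (fun σ => σ.2 = xs ++ [b]), d σ.1 * R σ.1 = 0 := by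
      refine Finset.sum_eq_zero fun σ hσ => ?_
      obtain ⟨hσG, hσx⟩ := Finset.mem_filter.mp hσ
      have := hmount σ hσG w.length (hσx ▸ hlen)
      rw [hσx, ← List.prefix_iff_eq_take.mp hpre, hw] at this
      exact absurd this (lt_irrefl 1)
    rw [hrec _ (by simp), List.dropLast_concat, hextra, add_zero]
    rcases (hpre'.length_le).eq_or_lt with heq | hlt
    · rw [← hpre'.eq_of_length heq, hw]; ring
    · rw [ih hpre' hlt, mul_zero]

end FlowRecursion

/-- Lemma 4: for the `q`-flow `Q` (the minimal semimeasure dominating `R`),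
`Q(y) = 0` iff some unit-length edge along `y` has weight `0`,
i.e. iff `d(y^n) = 1` for some `n < |y|`; under the construction's property
that extra edges are never mounted across vertices with delay `1`. -/
theorem stmt14 (d : List Bool → ℝ) (R : List Bool → ℝ)
    (G : Finset (List Bool × List Bool))
    (hd : ∀ x, 0 ≤ d x ∧ d x ≤ 1)
    (hR : ∀ x, 0 ≤ R x)
    (hroot : R [] = 1)
    (hrec : ∀ y : List Bool, y ≠ [] →
      R y = (1 - d y.dropLast) / 2 * R y.dropLast +
        ∑ σ ∈ G.filter (fun σ => σ.2 = y), d σ.1 * R σ.1)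
    (hmount : ∀ σ ∈ G, ∀ k : ℕ, k < σ.2.length → d (σ.2.take k) < 1)
    (Q : List Bool → ℝ)
    (hQsemi : Q [] ≤ 1 ∧ (∀ x, 0 ≤ Q x) ∧
      ∀ x, Q (x ++ [false]) + Q (x ++ [true]) ≤ Q x)
    (hQdom : ∀ x, R x ≤ Q x)
    (hQmin : ∀ Q' : List Bool → ℝ,
      (Q' [] ≤ 1 ∧ (∀ x, 0 ≤ Q' x) ∧
        ∀ x, Q' (x ++ [false]) + Q' (x ++ [true]) ≤ Q' x) →
      (∀ x, R x ≤ Q' x) → ∀ x, Q x ≤ Q' x) :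
    ∀ y : List Bool, (Q y = 0 ↔ ∃ n : ℕ, n < y.length ∧ d (y.take n) = 1) := by
  have hflow : FlowRecursion d R G := hrec
  intro y
  constructor
  · intro hQy
    by_contra! hlt
    have hRy := hflow.pos_of_delay_lt_one (fun x => (hd x).1) hR (hroot ▸ one_pos) y
      fun n hn => (hd _).2.lt_of_ne (hlt n hn)
    linarith [hQdom y]
  · rintro ⟨n, hn, hdn⟩
    let S : Set (List Bool) := {x | y.take n <+: x ∧ (y.take n).length < x.length}
    have hS : ∀ x b, x ∈ S → x ++ [b] ∈ S := fun x b ⟨hpre, hlen⟩ =>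
      ⟨hpre.trans (List.prefix_append x [b]), hlen.trans (by simp)⟩
    exact eq_zero_of_isLeast_semimeasure hQsemi hQdom hQmin hS
      (fun x ⟨hpre, hlen⟩ => hflow.eq_zero_beyond_delay_one hmount hdn x hpre hlen) y
      ⟨List.take_prefix n y, by simp; omega⟩
end

section
/- Let f: {0,1}* → [0,1] be partial with rational approximations φ_κ satisfying φ_κ(x) ≤ f(x) ≤ φ_κ(x) + κ whenever defined. Fix κ ∈ (0,1/2), a string x on which φ_κ is defined, and define the 'hardly predictable' continuation bit b(x) = 0 if φ_κ(x) ≥ 1/2 and b(x) = 1 otherwise. Then for any random variable p with Pr{p < 1/2} = f(x): if b(x) = 1 then E[1_{p < 1/2}·(b(x) − p)] ≥ (1/2)·(1/2 − κ), and if b(x) = 0 then E[1_{p ≥ 1/2}·(b(x) − p)] ≤ −(1/2)·(1/2 − κ). -/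
open MeasureTheory

section

variable {Ω : Type*} [MeasurableSpace Ω] {μ : Measure Ω}

lemma integral_ite_one_mul_eq_setIntegral {P : Ω → Prop} [DecidablePred P]
    (hP : MeasurableSet {ω | P ω}) (g : Ω → ℝ) :
    ∫ ω, (if P ω then (1 : ℝ) else 0) * g ω ∂μ = ∫ ω in {ω | P ω}, g ω ∂μ := by
  rw [← integral_indicator hP]
  congr with ω
  by_cases h : P ω <;> simp [h]

variable [IsFiniteMeasure μ] {p : Ω → ℝ}

lemma half_mul_measureReal_le_integral_ite_lt_half (hp : Measurable p) (hpint : Integrable p μ) :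
    (1/2 : ℝ) * μ.real {ω | p ω < 1/2} ≤
      ∫ ω, (if p ω < 1/2 then (1 : ℝ) else 0) * (1 - p ω) ∂μ := by
  have hs : MeasurableSet {ω | p ω < 1/2} := measurableSet_lt hp measurable_const
  rw [integral_ite_one_mul_eq_setIntegral hs]
  refine setIntegral_ge_of_const_le_real hs (measure_ne_top μ _) (fun ω hω => ?_)
    ((integrable_const 1).sub hpint).integrableOn
  have : p ω < 1/2 := hω
  linarith

lemma integral_ite_half_le_neg_le_neg_half_mul_measureReal (hp : Measurable p)
    (hpint : Integrable p μ) :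
    ∫ ω, (if 1/2 ≤ p ω then (1 : ℝ) else 0) * (0 - p ω) ∂μ ≤
      -((1/2) * μ.real {ω | 1/2 ≤ p ω}) := by
  have ht : MeasurableSet {ω | 1/2 ≤ p ω} := measurableSet_le measurable_const hp
  rw [integral_ite_one_mul_eq_setIntegral ht]
  simp only [zero_sub, integral_neg, neg_le_neg_iff]
  exact setIntegral_ge_of_const_le_real ht (measure_ne_top μ _) (fun ω hω => hω)
    hpint.integrableOn

end

theorem stmt19_general {Ω : Type*} [MeasurableSpace Ω] (μ : Measure Ω)
    [IsProbabilityMeasure μ]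
    (p : Ω → ℝ) (hpmeas : Measurable p) (hp01 : ∀ ω, 0 ≤ p ω ∧ p ω ≤ 1)
    (fx φ κ : ℝ)
    (hfx : fx = (μ {ω | p ω < 1/2}).toReal)
    (happrox : φ ≤ fx ∧ fx ≤ φ + κ) :
    ((1/2 : ℝ) ≤ φ →
      (1/2 : ℝ) ≤ (μ {ω | p ω < 1/2}).toReal ∧
      (1/2 : ℝ) * (μ {ω | p ω < 1/2}).toReal ≤
        ∫ ω, (if p ω < 1/2 then (1 : ℝ) else 0) * (1 - p ω) ∂μ ∧
      (1/4 : ℝ) ≤ ∫ ω, (if p ω < 1/2 then (1 : ℝ) else 0) * (1 - p ω) ∂μ) ∧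
    (φ < 1/2 →
      (1/2 - κ : ℝ) ≤ (μ {ω | 1/2 ≤ p ω}).toReal ∧
      ∫ ω, (if 1/2 ≤ p ω then (1 : ℝ) else 0) * (0 - p ω) ∂μ ≤
        -((1/2) * (1/2 - κ))) := by
  have hpint : Integrable p μ :=
    .of_bound hpmeas.aestronglyMeasurable 1 (.of_forall fun ω => by
      rw [Real.norm_eq_abs, abs_le]; constructor <;> linarith [hp01 ω])
  have hs : MeasurableSet {ω | p ω < 1/2} := measurableSet_lt hpmeas measurable_const
  have hcompl : μ.real {ω | 1/2 ≤ p ω} = 1 - fx := by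
    rw [hfx, ← measureReal_def, ← probReal_compl_eq_one_sub hs]
    congr with ω
    simp
  refine ⟨fun hφ => ?_, fun hφ => ?_⟩
  · have hbelow : (1/2 : ℝ) ≤ μ.real {ω | p ω < 1/2} := by
      rw [measureReal_def, ← hfx]; linarith
    have hbound := half_mul_measureReal_le_integral_ite_lt_half (μ := μ) hpmeas hpint
    exact ⟨hbelow, hbound, by linarith⟩
  · have habove : 1/2 - κ ≤ μ.real {ω | 1/2 ≤ p ω} := by
      rw [hcompl]; linarith
    have hbound := integral_ite_half_le_neg_le_neg_half_mul_measureReal (μ := μ) hpmeas hpint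
    exact ⟨habove, by linarith⟩

/-- If `φ ≤ f(x) = Pr{p < 1/2} ≤ φ + κ`, then: when `φ ≥ 1/2` the forecast is
below `1/2` with probability at least `1/2`, and the hardly-predictable bit
`1` gives `E[1_{p<1/2}(1 − p)] ≥ (1/2)·Pr{p < 1/2} ≥ 1/4`; when `φ < 1/2`,
`Pr{p ≥ 1/2} ≥ 1/2 − κ` and `E[1_{p≥1/2}(0 − p)] ≤ −(1/2)(1/2 − κ)`. -/
theorem stmt19 {Ω : Type*} [MeasurableSpace Ω] (μ : Measure Ω)
    [IsProbabilityMeasure μ]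
    (p : Ω → ℝ) (hpmeas : Measurable p) (hp01 : ∀ ω, 0 ≤ p ω ∧ p ω ≤ 1)
    (fx φ κ : ℝ) (hκ : 0 < κ ∧ κ < 1/2)
    (hfx : fx = (μ {ω | p ω < 1/2}).toReal)
    (happrox : φ ≤ fx ∧ fx ≤ φ + κ) :
    ((1/2 : ℝ) ≤ φ →
      (1/2 : ℝ) ≤ (μ {ω | p ω < 1/2}).toReal ∧
      (1/2 : ℝ) * (μ {ω | p ω < 1/2}).toReal ≤
        ∫ ω, (if p ω < 1/2 then (1 : ℝ) else 0) * (1 - p ω) ∂μ ∧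
      (1/4 : ℝ) ≤ ∫ ω, (if p ω < 1/2 then (1 : ℝ) else 0) * (1 - p ω) ∂μ) ∧
    (φ < 1/2 →
      (1/2 - κ : ℝ) ≤ (μ {ω | 1/2 ≤ p ω}).toReal ∧
      ∫ ω, (if 1/2 ≤ p ω then (1 : ℝ) else 0) * (0 - p ω) ∂μ ≤
        -((1/2) * (1/2 - κ))) :=
  stmt19_general μ p hpmeas hp01 fx φ κ hfx happrox
end
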